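/- arXiv:2511.03335 — 4 statements merged into one kernel-verified Lean document; each statement's English description precedes it below -/
import Mathlib

section
/- For all positive integers k and c there exists an integer n such that the chromatic number of the shift graph S_{k,n} is greater than c. -/
open SimpleGraph

namespace SignedGS

variable {V : Type*}

/-- The sign of a walk in a signed graph: the product of the signs of its edges. -/
def walkSign {G : SimpleGraph V} (σ : Sym2 V → ℤˣ) {u v : V} (w : G.Walk u v) : ℤˣ :=
  (w.edges.map σ).prod

/-- `X` is a balanced set of `(G, σ)`: every cycle of the subgraph induced on `X`
is positive. -/
def IsBalancedSet (G : SimpleGraph V) (σ : Sym2 V → ℤˣ) (X : Set V) : Prop :=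
  ∀ ⦃v : V⦄ (w : G.Walk v v), w.IsCycle → (∀ u ∈ w.support, u ∈ X) → walkSign σ w = 1

/-- `(G, σ)` can be covered by `n` balanced sets. -/
def BalancedColorable (G : SimpleGraph V) (σ : Sym2 V → ℤˣ) (n : ℕ) : Prop :=
  ∃ f : V → Fin n, ∀ i : Fin n, IsBalancedSet G σ {v | f v = i}

/-- The balanced chromatic number of `(G, σ)`. -/
noncomputable def balancedChromNum (G : SimpleGraph V) (σ : Sym2 V → ℤˣ) : ℕ :=
  sInf {n | BalancedColorable G σ n}

/-- The set `X ⊆ V` can be covered by `n` sets each of which is balanced in `(G, σ)`. -/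
def BalancedColorableOn (G : SimpleGraph V) (σ : Sym2 V → ℤˣ) (X : Set V) (n : ℕ) : Prop :=
  ∃ f : V → Fin n, ∀ i : Fin n, IsBalancedSet G σ {v | v ∈ X ∧ f v = i}

/-- The balanced chromatic number of the signed subgraph of `(G, σ)` induced on `X`. -/
noncomputable def balancedChromNumOn (G : SimpleGraph V) (σ : Sym2 V → ℤˣ) (X : Set V) : ℕ :=
  sInf {n | BalancedColorableOn G σ X n}

/-- `(G, σ)⁻` : the spanning subgraph of `G` consisting of the negative edges. -/
def negSubgraph (G : SimpleGraph V) (σ : Sym2 V → ℤˣ) : SimpleGraph V where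
  Adj u v := G.Adj u v ∧ σ s(u, v) = -1
  symm := by
    constructor
    intro u v h
    refine ⟨h.1.symm, ?_⟩
    rw [Sym2.eq_swap]
    exact h.2
  loopless := by constructor; intro v h; exact G.irrefl h.1

/-- Two signatures on `G` are switching equivalent. -/
def SwitchEquiv (G : SimpleGraph V) (σ σ' : Sym2 V → ℤˣ) : Prop :=
  ∃ η : V → ℤˣ, ∀ u v : V, G.Adj u v → σ' s(u, v) = η u * σ s(u, v) * η v

/-- Every triangle of `(G, σ)` is positive. -/
def AllTrianglesPositive (G : SimpleGraph V) (σ : Sym2 V → ℤˣ) : Prop :=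
  ∀ u v w : V, G.Adj u v → G.Adj v w → G.Adj u w →
    σ s(u, v) * σ s(v, w) * σ s(u, w) = 1

/-- `G` contains an induced copy of `F`. -/
def HasInducedCopy {W : Type*} (F : SimpleGraph W) (G : SimpleGraph V) : Prop :=
  ∃ f : W ↪ V, ∀ a b : W, G.Adj (f a) (f b) ↔ F.Adj a b

/-- The star `K_{1,m}` with center `0` and `m` leaves. -/
def starGraph (m : ℕ) : SimpleGraph (Fin (m + 1)) where
  Adj a b := (a = 0 ∨ b = 0) ∧ a ≠ b
  symm := by constructor; rintro a b ⟨h1, h2⟩; exact ⟨h1.symm, h2.symm⟩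
  loopless := by constructor; rintro a ⟨_, h⟩; exact h rfl

private def disjUnionAdj {W1 W2 : Type*} (F1 : SimpleGraph W1) (F2 : SimpleGraph W2) :
    W1 ⊕ W2 → W1 ⊕ W2 → Prop
  | .inl x, .inl y => F1.Adj x y
  | .inr x, .inr y => F2.Adj x y
  | _, _ => False

/-- The disjoint union `F1 + F2` of two graphs. -/
def disjUnion {W1 W2 : Type*} (F1 : SimpleGraph W1) (F2 : SimpleGraph W2) :
    SimpleGraph (W1 ⊕ W2) where
  Adj := disjUnionAdj F1 F2
  symm := by
    constructor
    rintro (x | x) (y | y) h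
    · exact F1.adj_symm h
    · exact h.elim
    · exact h.elim
    · exact F2.adj_symm h
  loopless := by
    constructor
    rintro (x | x) h
    · exact F1.irrefl h
    · exact F2.irrefl h

private def fullJoinAdj {W1 W2 : Type*} (G1 : SimpleGraph W1) (G2 : SimpleGraph W2) :
    W1 ⊕ W2 → W1 ⊕ W2 → Prop
  | .inl x, .inl y => G1.Adj x y
  | .inr x, .inr y => G2.Adj x y
  | _, _ => True

/-- The full join `G1 ⋈ G2` of two vertex-disjoint graphs. -/
def fullJoin {W1 W2 : Type*} (G1 : SimpleGraph W1) (G2 : SimpleGraph W2) :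
    SimpleGraph (W1 ⊕ W2) where
  Adj := fullJoinAdj G1 G2
  symm := by
    constructor
    rintro (x | x) (y | y) h
    · exact G1.adj_symm h
    · trivial
    · trivial
    · exact G2.adj_symm h
  loopless := by
    constructor
    rintro (x | x) h
    · exact G1.irrefl h
    · exact G2.irrefl h

/-- The linear forest with `l` components, the `i`-th component being a path
on `m i` vertices. -/
def linearForest (l : ℕ) (m : Fin l → ℕ) : SimpleGraph (Σ i : Fin l, Fin (m i)) where
  Adj a b := a.1 = b.1 ∧ ((a.2 : ℕ) + 1 = (b.2 : ℕ) ∨ (b.2 : ℕ) + 1 = (a.2 : ℕ))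
  symm := by constructor; rintro a b ⟨h1, h2⟩; exact ⟨h1.symm, h2.symm⟩
  loopless := by constructor; rintro a ⟨_, h⟩; omega

/-- `(G, σ)` has an induced subgraph switching equivalent to the all-negative `K_4`. -/
def HasSwitchK4Neg (G : SimpleGraph V) (σ : Sym2 V → ℤˣ) : Prop :=
  ∃ f : Fin 4 ↪ V, (∀ a b : Fin 4, a ≠ b → G.Adj (f a) (f b)) ∧
    ∃ η : Fin 4 → ℤˣ, ∀ a b : Fin 4, a ≠ b → η a * σ s(f a, f b) * η b = -1

/-- `(G, σ)` has a triangle all of whose edges are negative. -/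
def HasNegTriangle (G : SimpleGraph V) (σ : Sym2 V → ℤˣ) : Prop :=
  ∃ u v w : V, G.Adj u v ∧ G.Adj v w ∧ G.Adj u w ∧
    σ s(u, v) = -1 ∧ σ s(v, w) = -1 ∧ σ s(u, w) = -1

/-- `(G, σ)` has four vertices inducing a copy of `(K_4, M)`: a complete graph on four
vertices whose negative edges form a perfect matching. -/
def HasK4M (G : SimpleGraph V) (σ : Sym2 V → ℤˣ) : Prop :=
  ∃ a b c d : V, a ≠ b ∧ a ≠ c ∧ a ≠ d ∧ b ≠ c ∧ b ≠ d ∧ c ≠ d ∧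
    G.Adj a b ∧ G.Adj a c ∧ G.Adj a d ∧ G.Adj b c ∧ G.Adj b d ∧ G.Adj c d ∧
    σ s(a, b) = -1 ∧ σ s(c, d) = -1 ∧
    σ s(a, c) = 1 ∧ σ s(a, d) = 1 ∧ σ s(b, c) = 1 ∧ σ s(b, d) = 1

/-- The vertices of the shift graph `S_{k,n}`: strictly increasing `k`-sequences
with values in `{1, …, n}`. -/
def ShiftVertex (k n : ℕ) : Type :=
  {s : Fin k → ℕ // StrictMono s ∧ ∀ i, s i ∈ Finset.Icc 1 n}

/-- `b` is obtained from `a` by shifting: `b = (a_2, …, a_k, t)` for some `t`. -/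
def ShiftFollows {k n : ℕ} (a b : ShiftVertex k n) : Prop :=
  ∀ (i : ℕ) (h : i + 1 < k), b.1 ⟨i, Nat.lt_of_succ_lt h⟩ = a.1 ⟨i + 1, h⟩

/-- The shift graph `S_{k,n}`. -/
def shiftGraph (k n : ℕ) : SimpleGraph (ShiftVertex k n) where
  Adj a b := a ≠ b ∧ (ShiftFollows a b ∨ ShiftFollows b a)
  symm := by constructor; rintro a b ⟨h1, h2⟩; exact ⟨h1.symm, h2.symm⟩
  loopless := by constructor; rintro a ⟨h, _⟩; exact h rfl


/-! If `C` colours `S_{k+2,n}`, colour a vertex `u` of `S_{k+1,n}` by the set of colours that `C`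
gives to its extensions `(u_1, …, u_{k+1}, t)`. For an edge `u → v = (u_2, …, u_{k+1}, w)` of
`S_{k+1,n}`, the extension `a = (u_1, …, u_{k+1}, w)` of `u` is adjacent in `S_{k+2,n}` to every
extension of `v`, so `C a` is a colour of `u` but not of `v`. Hence `χ(S_{k+1,n}) ≤ 2 ^ χ(S_{k+2,n})`,
and since `S_{1,n}` is the complete graph `K_n`, induction on `k` shows that `χ(S_{k+1,n})` is
unbounded in `n`. -/

namespace ShiftVertex

variable {k n : ℕ}

def snoc (u : ShiftVertex (k + 1) n) (w : ℕ) (hw : u.1 (Fin.last k) < w) (hwn : w ≤ n) :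
    ShiftVertex (k + 2) n :=
  ⟨Fin.snoc u.1 w, by simpa [Fin.insertNth_last'] using Fin.strictMono_insertNth_last u.2.1 w hw,
    Fin.lastCases (by have := (Finset.mem_Icc.1 (u.2.2 (Fin.last k))).1; simp; omega)
      (fun i => by simpa using u.2.2 i)⟩

lemma last_lt_of_shiftFollows {u v : ShiftVertex (k + 2) n} (h : ShiftFollows u v) :
    u.1 (Fin.last (k + 1)) < v.1 (Fin.last (k + 1)) := by
  have hlt : v.1 ⟨k, by omega⟩ < v.1 (Fin.last (k + 1)) := v.2.1 (Fin.mk_lt_mk.2 (by simp))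
  rwa [h k (by omega)] at hlt

lemma shiftFollows_and_last_lt_of_adj {u v : ShiftVertex (k + 1) n}
    (h : (shiftGraph (k + 1) n).Adj u v) :
    (ShiftFollows u v ∧ u.1 (Fin.last k) < v.1 (Fin.last k)) ∨
      (ShiftFollows v u ∧ v.1 (Fin.last k) < u.1 (Fin.last k)) := by
  obtain ⟨hne, hfol⟩ := h
  cases k with
  | succ k =>
    rcases hfol with h | h
    exacts [.inl ⟨h, last_lt_of_shiftFollows h⟩, .inr ⟨h, last_lt_of_shiftFollows h⟩]
  | zero =>
    have hfol : ∀ x y : ShiftVertex 1 n, ShiftFollows x y := fun _ _ i hi => by omega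
    have hlast : u.1 0 ≠ v.1 0 := fun h =>
      hne (Subtype.ext (funext fun i => by rwa [Fin.fin_one_eq_zero i]))
    rcases hlast.lt_or_gt with h | h
    exacts [.inl ⟨hfol u v, h⟩, .inr ⟨hfol v u, h⟩]

end ShiftVertex

section ExtensionColors

variable {α : Type*} {k n : ℕ}

def extensionColors (C : (shiftGraph (k + 2) n).Coloring α) (u : ShiftVertex (k + 1) n) :
    Set α :=
  {x | ∃ b : ShiftVertex (k + 2) n, Fin.init b.1 = u.1 ∧ C b = x}

lemma shiftFollows_snoc {u v : ShiftVertex (k + 1) n} (huv : ShiftFollows u v)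
    (hlt : u.1 (Fin.last k) < v.1 (Fin.last k)) {b : ShiftVertex (k + 2) n}
    (hb : Fin.init b.1 = v.1) :
    ShiftFollows (u.snoc (v.1 (Fin.last k)) hlt (Finset.mem_Icc.1 (v.2.2 _)).2) b := by
  intro i hi
  have hbi : b.1 ⟨i, by omega⟩ = v.1 ⟨i, by omega⟩ := congrFun hb ⟨i, by omega⟩
  rw [hbi]
  rcases Nat.lt_or_ge (i + 1) (k + 1) with hik | hik
  · rw [huv i hik]
    exact (Fin.snoc_castSucc (α := fun _ => ℕ) _ _ ⟨i + 1, hik⟩).symm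
  · obtain rfl : i = k := by omega
    exact (Fin.snoc_last (α := fun _ => ℕ) _ _).symm

lemma extensionColors_ne (C : (shiftGraph (k + 2) n).Coloring α) {u v : ShiftVertex (k + 1) n}
    (huv : ShiftFollows u v) (hlt : u.1 (Fin.last k) < v.1 (Fin.last k)) :
    extensionColors C u ≠ extensionColors C v := by
  intro h
  set a := u.snoc (v.1 (Fin.last k)) hlt (Finset.mem_Icc.1 (v.2.2 _)).2
  obtain ⟨b, hb, hCb⟩ : C a ∈ extensionColors C v := h ▸ ⟨a, Fin.init_snoc _ _, rfl⟩
  have hab : a ≠ b := fun hab => hlt.ne <| by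
    simpa [a, ShiftVertex.snoc, ← hb, Fin.init] using congrArg (·.1 (Fin.last k).castSucc) hab
  exact C.valid ⟨hab, .inl (shiftFollows_snoc huv hlt hb)⟩ hCb.symm

def extensionColoring (C : (shiftGraph (k + 2) n).Coloring α) :
    (shiftGraph (k + 1) n).Coloring (Set α) :=
  Coloring.mk (extensionColors C) fun h => by
    rcases ShiftVertex.shiftFollows_and_last_lt_of_adj h with ⟨huv, hlt⟩ | ⟨hvu, hlt⟩
    exacts [extensionColors_ne C huv hlt, (extensionColors_ne C hvu hlt).symm]

end ExtensionColors

lemma colorable_shiftGraph_of_colorable_succ {k n c : ℕ}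
    (h : (shiftGraph (k + 2) n).Colorable c) :
    (shiftGraph (k + 1) n).Colorable (2 ^ c) := by
  obtain ⟨C⟩ := h
  simpa using (extensionColoring C).colorable

lemma le_of_colorable_shiftGraph_one {n c : ℕ} (h : (shiftGraph 1 n).Colorable c) : n ≤ c := by
  let f (i : Fin n) : ShiftVertex 1 n :=
    ⟨fun _ => i + 1, Subsingleton.strictMono _,
      fun _ => Finset.mem_Icc.2 ⟨Nat.le_add_left 1 i, i.2⟩⟩
  have hf : Pairwise fun i j => (shiftGraph 1 n).Adj (f i) (f j) := fun i j hij =>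
    ⟨fun h => hij (Fin.ext (by simpa [f] using congrFun (congrArg Subtype.val h) 0)),
      .inl fun _ hi => by omega⟩
  simpa using h.card_le_of_pairwise_adj f hf

lemma exists_not_colorable_shiftGraph (k c : ℕ) : ∃ n, ¬(shiftGraph (k + 1) n).Colorable c := by
  induction k generalizing c with
  | zero => exact ⟨c + 1, fun h => by simpa using le_of_colorable_shiftGraph_one h⟩
  | succ k ih =>
    obtain ⟨n, hn⟩ := ih (2 ^ c)
    exact ⟨n, fun h => hn (colorable_shiftGraph_of_colorable_succ h)⟩

theorem stmt6_general (k c : ℕ) (hk : 0 < k) :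
    ∃ n : ℕ, (c : ℕ∞) < (shiftGraph k n).chromaticNumber := by
  obtain ⟨k, rfl⟩ := Nat.exists_eq_add_one_of_ne_zero hk.ne'
  obtain ⟨n, hn⟩ := exists_not_colorable_shiftGraph k c
  exact ⟨n, lt_of_not_ge fun h => hn (chromaticNumber_le_iff_colorable.1 h)⟩

/-- shift graphs have unbounded chromatic number. -/
theorem stmt6 (k c : ℕ) (hk : 0 < k) (hc : 0 < c) :
    ∃ n : ℕ, (c : ℕ∞) < (shiftGraph k n).chromaticNumber :=
  stmt6_general k c hk

end SignedGS
end

section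
/- For every positive integer c there exists a signed graph (G, σ) such that: (i) every triangle of (G, σ) has positive sign (equivalently, no induced subgraph of (G, σ) is switching equivalent to the all-negative triangle (K_3, −)); (ii) the underlying graph G contains no induced copy of the claw K_{1,3}; and (iii) χ_b(G, σ) > c. -/
/-!
The example is the line graph of the shift graph `S_{2,N}`: its vertices are the triples
`a < b < x`, i.e. pairs of consecutive segments `(a, b)`, `(b, x)`, two triples being adjacent
when they share a segment, positively if it sits in the same position in both. Line graphs are
claw-free. Three pairwise adjacent triples share one segment, so writing `ε` for its position
(`±1`) in each, the triangle has sign `(ε_u ε_v) (ε_v ε_w) (ε_u ε_w) = 1`.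

On the other hand, each class of a balanced `c`-coloring switches to all-positive (Harary), so recording
the class and the switching sign properly colors the negative edges with `2c` colors. These
contain the shift graph `S_{3,N}`, whose chromatic number exceeds `log₂ log₂ N`; hence
`N = 2 ^ 2 ^ (2c) + 1` forces more than `c` balanced sets.
-/

open SimpleGraph

namespace SignedGS

variable {V : Type*}

section Balance

variable {H : SimpleGraph V} {σ : Sym2 V → ℤˣ}

@[simp] lemma walkSign_nil {v : V} : walkSign σ (Walk.nil : H.Walk v v) = 1 := rfl

@[simp] lemma walkSign_cons {u v w : V} (h : H.Adj u v) (p : H.Walk v w) :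
    walkSign σ (Walk.cons h p) = σ s(u, v) * walkSign σ p := by
  simp [walkSign]

@[simp] lemma walkSign_append {u v w : V} (p : H.Walk u v) (q : H.Walk v w) :
    walkSign σ (p.append q) = walkSign σ p * walkSign σ q := by
  simp [walkSign]

@[simp] lemma walkSign_reverse {u v : V} (p : H.Walk u v) :
    walkSign σ p.reverse = walkSign σ p := by
  simp [walkSign, List.prod_reverse]

@[simp] lemma walkSign_copy {u v u' v' : V} (p : H.Walk u v) (hu : u = u') (hv : v = v') :
    walkSign σ (p.copy hu hv) = walkSign σ p := by
  simp [walkSign]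

@[simp] lemma walkSign_mapLe {H' : SimpleGraph V} (hle : H ≤ H') {u v : V} (p : H.Walk u v) :
    walkSign σ (p.mapLe hle) = walkSign σ p := by
  simp [walkSign]

lemma walkSign_bypass [DecidableEq V]
    (hH : ∀ ⦃v : V⦄ (c : H.Walk v v), c.IsCycle → walkSign σ c = 1) {u v : V}
    (p : H.Walk u v) : walkSign σ p.bypass = walkSign σ p := by
  induction p with
  | nil => rfl
  | @cons u u' v h p ih =>
    rw [Walk.bypass]
    split_ifs with hu
    · set q := p.bypass.takeUntil u hu
      have hq : q.IsPath := p.bypass_isPath.takeUntil hu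
      -- `u → u' ⇝ u` is either a cycle or the edge `uu'` traversed back and forth
      have hloop : σ s(u, u') * walkSign σ q = 1 := by
        by_cases he : s(u', u) ∈ q.edges
        · rw [hq.eq_adj_toWalk_of_mem_edges he]
          simp [walkSign, Sym2.eq_swap, Int.units_mul_self]
        · rw [← walkSign_cons h]
          exact hH _ ((Walk.cons_isCycle_iff q h).mpr ⟨hq, by rwa [Sym2.eq_swap]⟩)
      calc walkSign σ (p.bypass.dropUntil u hu)
          = σ s(u, u') * walkSign σ q * walkSign σ (p.bypass.dropUntil u hu) := by
            rw [hloop, one_mul]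
        _ = σ s(u, u') * walkSign σ p := by
            rw [mul_assoc, ← walkSign_append, p.bypass.take_spec hu, ih]
        _ = walkSign σ (Walk.cons h p) := (walkSign_cons h p).symm
    · rw [walkSign_cons, walkSign_cons, ih]

lemma walkSign_eq_one_of_forall_isCycle
    (hH : ∀ ⦃v : V⦄ (c : H.Walk v v), c.IsCycle → walkSign σ c = 1) {v : V}
    (w : H.Walk v v) : walkSign σ w = 1 := by
  classical
  rw [← walkSign_bypass hH, (Walk.isPath_iff_nil.mp w.bypass_isPath).eq_nil, walkSign_nil]

lemma units_eq_mul_of_mul_mul_eq_one {a b s : ℤˣ} (h : a * (s * b) = 1) : s = a * b := by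
  rcases Int.units_eq_one_or a with rfl | rfl <;> rcases Int.units_eq_one_or b with rfl | rfl <;>
    rcases Int.units_eq_one_or s with rfl | rfl <;> simp_all

theorem exists_switching_of_forall_isCycle
    (hH : ∀ ⦃v : V⦄ (c : H.Walk v v), c.IsCycle → walkSign σ c = 1) :
    ∃ η : V → ℤˣ, ∀ u v, H.Adj u v → σ s(u, v) = η u * η v := by
  let root (u : V) : V := (H.connectedComponentMk u).out
  have reach (u : V) : H.Reachable (root u) u :=
    ConnectedComponent.exact (H.connectedComponentMk u).out_eq
  refine ⟨fun u => walkSign σ (reach u).some, fun u v h => ?_⟩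
  have hroot : root v = root u := by
    simp only [root, ConnectedComponent.eq.mpr h.reachable]
  apply units_eq_mul_of_mul_mul_eq_one
  simpa using walkSign_eq_one_of_forall_isCycle hH
    (((reach u).some.append (Walk.cons h (reach v).some.reverse)).copy rfl hroot)

end Balance

def sameColorGraph {α : Type*} (G : SimpleGraph V) (f : V → α) : SimpleGraph V where
  Adj u v := G.Adj u v ∧ f u = f v
  symm := ⟨fun _ _ h => ⟨h.1.symm, h.2.symm⟩⟩
  loopless := ⟨fun _ h => G.irrefl h.1⟩

section BalancedColoring

variable {G : SimpleGraph V} {σ : Sym2 V → ℤˣ}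

lemma sameColorGraph_le {α : Type*} (f : V → α) : sameColorGraph G f ≤ G := fun _ _ h => h.1

lemma apply_eq_of_mem_support_sameColorGraph {α : Type*} {f : V → α} {u v : V}
    (p : (sameColorGraph G f).Walk u v) : ∀ x ∈ p.support, f x = f u := by
  induction p with
  | nil => simp
  | cons h p ih =>
    intro x hx
    rcases List.mem_cons.mp (Walk.support_cons h p ▸ hx) with rfl | hx
    · rfl
    · exact (ih x hx).trans h.2.symm

lemma forall_isCycle_sameColorGraph {α : Type*} {f : V → α}
    (hf : ∀ i, IsBalancedSet G σ {v | f v = i}) ⦃v : V⦄ (c : (sameColorGraph G f).Walk v v)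
    (hc : c.IsCycle) : walkSign σ c = 1 := by
  rw [← walkSign_mapLe (sameColorGraph_le f)]
  refine hf (f v) _ ((Walk.isCycle_mapLe _).mpr hc) fun x hx => ?_
  rw [Walk.support_mapLe_eq_support] at hx
  exact apply_eq_of_mem_support_sameColorGraph c x hx

theorem BalancedColorable.colorable_negSubgraph {n : ℕ} (h : BalancedColorable G σ n) :
    (negSubgraph G σ).Colorable (2 * n) := by
  obtain ⟨f, hf⟩ := h
  obtain ⟨η, hη⟩ := exists_switching_of_forall_isCycle (forall_isCycle_sameColorGraph hf)
  let C : (negSubgraph G σ).Coloring (Fin n × ℤˣ) :=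
    Coloring.mk (fun v => (f v, η v)) fun {u v} huv heq => by
      obtain ⟨hfuv, hηuv⟩ := Prod.mk.inj heq
      have := hη u v ⟨huv.1, hfuv⟩
      rw [huv.2, hηuv, Int.units_mul_self] at this
      exact absurd this (by decide)
  simpa [mul_comm] using C.colorable

lemma isBalancedSet_of_subsingleton {X : Set V} (hX : X.Subsingleton) : IsBalancedSet G σ X := by
  rintro v (_ | @⟨_, u, _, h, p⟩) hc hsupp
  · exact absurd rfl hc.ne_nil
  · obtain rfl : v = u := hX (hsupp v (by simp)) (hsupp u (by simp))
    exact (G.irrefl h).elim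

lemma balancedColorable_card [Fintype V] : BalancedColorable G σ (Fintype.card V) :=
  ⟨Fintype.equivFin V, fun _ => isBalancedSet_of_subsingleton fun _ hx _ hy =>
    (Fintype.equivFin V).injective (hx.trans hy.symm)⟩

lemma lt_balancedChromNum [Fintype V] {k : ℕ} (h : ∀ n, BalancedColorable G σ n → k < n) :
    k < balancedChromNum G σ :=
  le_csInf (⟨_, balancedColorable_card⟩ : {n | BalancedColorable G σ n}.Nonempty) h

end BalancedColoring

section LineShiftGraph

variable {N : ℕ}

/-- A triple `a < b < x`, seen as the pair of consecutive segments `(a, b)`, `(b, x)`: an edge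
of the shift graph `S_{2,N}`, hence a vertex of its line graph. -/
abbrev IncTriple (N : ℕ) : Type :=
  {t : Fin N × Fin N × Fin N // t.1 < t.2.1 ∧ t.2.1 < t.2.2}

def IncTriple.seg (v : IncTriple N) : Fin 2 → Fin N × Fin N :=
  ![(v.1.1, v.1.2.1), (v.1.2.1, v.1.2.2)]

def lineShiftGraph (N : ℕ) : SimpleGraph (IncTriple N) where
  Adj u v := u ≠ v ∧ ∃ i j, u.seg i = v.seg j
  symm := ⟨fun _ _ ⟨hne, i, j, h⟩ => ⟨hne.symm, j, i, h.symm⟩⟩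
  loopless := ⟨fun _ h => h.1 rfl⟩

def lineShiftSign (N : ℕ) : Sym2 (IncTriple N) → ℤˣ :=
  Sym2.lift ⟨fun u v => if ∃ i, u.seg i = v.seg i then 1 else -1, fun u v => by
    simp only [@eq_comm _ (u.seg _)]⟩

lemma lineShiftSign_of_seg_eq {u v : IncTriple N} {i j : Fin 2} (h : u.seg i = v.seg j) :
    lineShiftSign N s(u, v) = if i = j then 1 else -1 := by
  simp only [lineShiftSign, Sym2.lift_mk]
  by_cases hij : i = j
  · subst hij
    rw [if_pos ⟨i, h⟩, if_pos rfl]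
  · rw [if_neg hij, if_neg]
    rintro ⟨k, hk⟩
    obtain ⟨_, hu₁, hu₂⟩ := u
    obtain ⟨_, hv₁, hv₂⟩ := v
    fin_cases i <;> fin_cases j <;> fin_cases k <;>
      simp_all [IncTriple.seg, Prod.ext_iff] <;> omega

-- A triple has only two segments, and three distinct segments cannot pairwise be consecutive.
lemma exists_common_seg {u v w : IncTriple N} (huv : ∃ i j, u.seg i = v.seg j)
    (hvw : ∃ j k, v.seg j = w.seg k) (huw : ∃ i k, u.seg i = w.seg k) :
    ∃ i j k, u.seg i = v.seg j ∧ v.seg j = w.seg k := by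
  obtain ⟨_, hu₁, hu₂⟩ := u
  obtain ⟨_, hv₁, hv₂⟩ := v
  obtain ⟨_, hw₁, hw₂⟩ := w
  obtain ⟨i, j, h₁⟩ := huv
  obtain ⟨j', k, h₂⟩ := hvw
  obtain ⟨i', k', h₃⟩ := huw
  fin_cases i <;> fin_cases j <;> fin_cases j' <;> fin_cases k <;> fin_cases i' <;>
    fin_cases k' <;> simp_all [IncTriple.seg, Prod.ext_iff, Fin.exists_fin_two] <;> omega

theorem allTrianglesPositive_lineShift :
    AllTrianglesPositive (lineShiftGraph N) (lineShiftSign N) := by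
  intro u v w huv hvw huw
  obtain ⟨i, j, k, hij, hjk⟩ := exists_common_seg huv.2 hvw.2 huw.2
  rw [lineShiftSign_of_seg_eq hij, lineShiftSign_of_seg_eq hjk,
    lineShiftSign_of_seg_eq (hij.trans hjk)]
  fin_cases i <;> fin_cases j <;> fin_cases k <;> rfl

-- Two of the three leaves contain the same segment of the centre, so they are adjacent.
theorem not_hasInducedCopy_star_lineShift :
    ¬ HasInducedCopy (starGraph 3) (lineShiftGraph N) := by
  rintro ⟨f, hf⟩
  have leaf (l : Fin 4) (hl : l ≠ 0) : ∃ i j, (f 0).seg i = (f l).seg j :=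
    ((hf 0 l).2 ⟨Or.inl rfl, hl.symm⟩).2
  have indep (l m : Fin 4) (hl : l ≠ 0) (hm : m ≠ 0) (hlm : l ≠ m) (i j : Fin 2) :
      (f l).seg i ≠ (f m).seg j := fun h =>
    by simpa [starGraph, hl, hm] using (hf l m).1 ⟨f.injective.ne hlm, i, j, h⟩
  obtain ⟨i₁, j₁, h₁⟩ := leaf 1 (by decide)
  obtain ⟨i₂, j₂, h₂⟩ := leaf 2 (by decide)
  obtain ⟨i₃, j₃, h₃⟩ := leaf 3 (by decide)
  rcases (by omega : i₁ = i₂ ∨ i₁ = i₃ ∨ i₂ = i₃) with rfl | rfl | rfl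
  · exact indep 1 2 (by decide) (by decide) (by decide) j₁ j₂ (h₁.symm.trans h₂)
  · exact indep 1 3 (by decide) (by decide) (by decide) j₁ j₃ (h₁.symm.trans h₃)
  · exact indep 2 3 (by decide) (by decide) (by decide) j₂ j₃ (h₂.symm.trans h₃)

/-- The shift graph `S_{3,N}`. -/
def shiftTripleGraph (N : ℕ) : SimpleGraph (IncTriple N) :=
  SimpleGraph.fromRel fun u v => u.seg 1 = v.seg 0

lemma shiftTripleGraph_le_negSubgraph :
    shiftTripleGraph N ≤ negSubgraph (lineShiftGraph N) (lineShiftSign N) := by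
  rintro u v ⟨hne, h | h⟩
  · exact ⟨⟨hne, 1, 0, h⟩, by rw [lineShiftSign_of_seg_eq h]; rfl⟩
  · exact ⟨⟨hne, 0, 1, h.symm⟩, by rw [lineShiftSign_of_seg_eq h.symm]; rfl⟩

/-- Erdős–Hajnal. `g a b` is the set of colors of the triples starting with `(a, b)`; since
`C (a, b, z) ∈ g a b \ g b z`, the sets `Γ a = {g a b | a < b}` are pairwise distinct. -/
theorem le_of_colorable_shiftTripleGraph {k : ℕ} (h : (shiftTripleGraph N).Colorable k) :
    N ≤ 2 ^ 2 ^ k := by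
  classical
  obtain ⟨C⟩ := h
  let g (a b : Fin N) : Finset (Fin k) :=
    (Finset.univ.filter fun v : IncTriple N => v.seg 0 = (a, b)).image C
  let Γ (a : Fin N) : Finset (Finset (Fin k)) :=
    (Finset.univ.filter (a < ·)).image (g a)
  have hg {a b z : Fin N} (hab : a < b) (hbz : b < z) : g a b ≠ g b z := by
    let t : IncTriple N := ⟨(a, b, z), hab, hbz⟩
    intro heq
    have ht : C t ∈ g b z := heq ▸ Finset.mem_image_of_mem C (by simp [t, IncTriple.seg])
    obtain ⟨v, hvmem, hCv⟩ := Finset.mem_image.mp ht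
    have hv : v.seg 0 = (b, z) := (Finset.mem_filter.mp hvmem).2
    have hne : t ≠ v := by
      rintro rfl
      simp [t, IncTriple.seg] at hv
      omega
    exact C.valid ((fromRel_adj _ _ _).mpr ⟨hne, Or.inl (by rw [hv]; rfl)⟩) hCv.symm
  have hΓ (a b : Fin N) (hab : a < b) : Γ a ≠ Γ b := by
    intro heq
    have hmem : g a b ∈ Γ b := heq ▸ Finset.mem_image_of_mem (g a) (by simpa using hab)
    obtain ⟨z, hz, hgz⟩ := Finset.mem_image.mp hmem
    exact hg hab (by simpa using hz) hgz.symm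
  simpa using Fintype.card_le_of_injective Γ (Function.Injective.of_lt_imp_ne hΓ)

theorem lt_balancedChromNum_lineShift (c : ℕ) :
    c < balancedChromNum (lineShiftGraph (2 ^ 2 ^ (2 * c) + 1))
      (lineShiftSign (2 ^ 2 ^ (2 * c) + 1)) := by
  refine lt_balancedChromNum fun n hn => ?_
  have hN := le_of_colorable_shiftTripleGraph
    (hn.colorable_negSubgraph.mono_left shiftTripleGraph_le_negSubgraph)
  by_contra! hnc
  have : 2 ^ 2 ^ (2 * n) ≤ 2 ^ 2 ^ (2 * c) :=
    Nat.pow_le_pow_right two_pos (Nat.pow_le_pow_right two_pos (by omega))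
  omega

end LineShiftGraph

theorem stmt8_general (c : ℕ) :
    ∃ (V : Type) (_ : Fintype V) (G : SimpleGraph V) (σ : Sym2 V → ℤˣ),
      AllTrianglesPositive G σ ∧ ¬ HasInducedCopy (starGraph 3) G ∧
        c < balancedChromNum G σ :=
  ⟨_, inferInstance, _, _, allTrianglesPositive_lineShift, not_hasInducedCopy_star_lineShift,
    lt_balancedChromNum_lineShift c⟩

/-- {(K_3,−), K_{1,3}} is not a GS set. -/
theorem stmt8 (c : ℕ) (hc : 0 < c) :
    ∃ (V : Type) (_ : Fintype V) (G : SimpleGraph V) (σ : Sym2 V → ℤˣ),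
      AllTrianglesPositive G σ ∧ ¬ HasInducedCopy (starGraph 3) G ∧
        c < balancedChromNum G σ :=
  stmt8_general c

end SignedGS
end

section
/- For every positive integer k, every signed graph (G, σ) in which every triangle is positive (equivalently, with no induced subgraph switching equivalent to the all-negative triangle (K_3, −)) and whose underlying graph G contains no induced path on k + 2 vertices satisfies χ_b(G, σ) < 2^k. -/
open SimpleGraph

namespace SignedGS

variable {V : Type*}

/-!
Gyárfás' path argument. If every triangle is positive, the closed neighbourhood `N[v]` of any
vertex is balanced: switching each neighbour `u` by `σ(vu)` makes every edge inside `N[v]`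
positive. Let `C` be connected and `v ∈ C`. Give `N[v] ∩ C` one colour. Every component `D` of
`C \ N[v]` has a neighbour `v' ∈ N(v)`, and an induced path starting at `v'` inside `D ∪ {v'}`
extends by `v` to one starting at `v` inside `C`. Recursing on `D ∪ {v'}` with root `v'` shows
that if the induced paths from `v` in `C` have fewer than `m + 2` edges, then `m + 1` balanced
sets cover `C`. An induced-`P_{k+2}`-free graph thus has `χ_b ≤ k < 2^k`.
-/

section

variable {G : SimpleGraph V} {σ : Sym2 V → ℤˣ}

lemma apply_eq_of_forall_mem_support {ι : Type*} {c : V → ι} {X : Set V}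
    (hc : ∀ u ∈ X, ∀ u' ∈ X, G.Adj u u' → c u = c u') {a b : V} (w : G.Walk a b)
    (hw : ∀ u ∈ w.support, u ∈ X) : ∀ u ∈ w.support, c u = c a := by
  induction w with
  | nil => simp
  | cons hadj w ih =>
    simp only [Walk.support_cons, List.mem_cons, forall_eq_or_imp] at hw
    intro u hu
    rcases List.mem_cons.1 hu with rfl | hu
    · rfl
    rw [ih hw.2 u hu, hc _ hw.1 _ (hw.2 _ w.start_mem_support) hadj]

lemma IsBalancedSet.mono {X Y : Set V} (h : IsBalancedSet G σ Y) (hXY : X ⊆ Y) :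
    IsBalancedSet G σ X :=
  fun _ w hw hX => h w hw fun u hu => hXY (hX u hu)

lemma walkSign_eq_mul_of_sign_eq_mul {X : Set V} {φ : V → ℤˣ}
    (hφ : ∀ u ∈ X, ∀ u' ∈ X, G.Adj u u' → σ s(u, u') = φ u * φ u') {a b : V}
    (w : G.Walk a b) (hw : ∀ u ∈ w.support, u ∈ X) : walkSign σ w = φ a * φ b := by
  induction w with
  | nil => simp [walkSign, Int.units_mul_self]
  | @cons a c b hadj w ih =>
    simp only [Walk.support_cons, List.mem_cons, forall_eq_or_imp] at hw
    have hsign : walkSign σ (.cons hadj w) = σ s(a, c) * walkSign σ w := by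
      simp [walkSign]
    rw [hsign, ih hw.2, hφ _ hw.1 _ (hw.2 _ w.start_mem_support) hadj]
    calc φ a * φ c * (φ c * φ b) = φ a * (φ c * φ c) * φ b := by ac_rfl
      _ = φ a * φ b := by rw [Int.units_mul_self, mul_one]

lemma isBalancedSet_of_sign_eq_mul {X : Set V} (φ : V → ℤˣ)
    (hφ : ∀ u ∈ X, ∀ u' ∈ X, G.Adj u u' → σ s(u, u') = φ u * φ u') :
    IsBalancedSet G σ X :=
  fun _ w _ hw => by rw [walkSign_eq_mul_of_sign_eq_mul hφ w hw, Int.units_mul_self]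

lemma isBalancedSet_insert_neighborSet (h : AllTrianglesPositive G σ) (v : V) :
    IsBalancedSet G σ (insert v (G.neighborSet v)) := by
  classical
  refine isBalancedSet_of_sign_eq_mul (fun u => if u = v then 1 else σ s(v, u)) ?_
  rintro a (rfl | ha) b (rfl | hb) hab
  · exact absurd hab (G.irrefl)
  · simp [hab.ne']
  · simp [hab.ne, Sym2.eq_swap]
  · rw [mem_neighborSet] at ha hb
    have htri := h v a b ha hab hb
    simp only [ha.ne', hb.ne', if_false]
    calc σ s(a, b) = σ s(v, a) * σ s(v, a) * σ s(a, b) * (σ s(v, b) * σ s(v, b)) := by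
          simp [Int.units_mul_self]
      _ = σ s(v, a) * σ s(a, b) * σ s(v, b) * (σ s(v, a) * σ s(v, b)) := by ac_rfl
      _ = σ s(v, a) * σ s(v, b) := by rw [htri, one_mul]

lemma BalancedColorableOn.mono {X Y : Set V} {m : ℕ} (h : BalancedColorableOn G σ Y m)
    (hXY : X ⊆ Y) : BalancedColorableOn G σ X m :=
  let ⟨f, hf⟩ := h
  ⟨f, fun i => (hf i).mono fun _ hu => ⟨hXY hu.1, hu.2⟩⟩

lemma BalancedColorableOn.balancedColorable {m : ℕ} (h : BalancedColorableOn G σ Set.univ m) :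
    BalancedColorable G σ m :=
  let ⟨f, hf⟩ := h
  ⟨f, fun i => (hf i).mono fun _ hu => ⟨trivial, hu⟩⟩

lemma IsBalancedSet.balancedColorableOn_one {X : Set V} (h : IsBalancedSet G σ X) :
    BalancedColorableOn G σ X 1 :=
  ⟨fun _ => 0, fun _ => h.mono fun _ hu => hu.1⟩

lemma BalancedColorableOn.union_of_isBalancedSet {X Y : Set V} {m : ℕ}
    (hX : BalancedColorableOn G σ X m) (hY : IsBalancedSet G σ Y) :
    BalancedColorableOn G σ (X ∪ Y) (m + 1) := by
  classical
  obtain ⟨f, hf⟩ := hX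
  refine ⟨fun u => if u ∈ Y then 0 else (f u).succ, Fin.cases ?_ fun i => ?_⟩
  · refine hY.mono fun u ⟨_, hu⟩ => ?_
    by_contra huY
    simp [huY] at hu
  · refine (hf i).mono fun u ⟨hXY, hu⟩ => ?_
    by_cases huY : u ∈ Y
    · simp only [huY, if_true] at hu
      exact absurd hu.symm (Fin.succ_ne_zero i)
    · simp only [huY, if_false, Fin.succ_inj] at hu
      exact ⟨hXY.resolve_right huY, hu⟩

lemma balancedColorableOn_of_fibers {ι : Type*} {X : Set V} {m : ℕ} (c : V → ι)
    (hc : ∀ u ∈ X, ∀ u' ∈ X, G.Adj u u' → c u = c u')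
    (h : ∀ x ∈ X, BalancedColorableOn G σ {u | u ∈ X ∧ c u = c x} (m + 1)) :
    BalancedColorableOn G σ X (m + 1) := by
  have hfiber : ∀ κ : ι, ∃ g : V → Fin (m + 1), ∀ x ∈ X, c x = κ →
      ∀ i, IsBalancedSet G σ {u | u ∈ {u | u ∈ X ∧ c u = κ} ∧ g u = i} := by
    intro κ
    by_cases hκ : ∃ x ∈ X, c x = κ
    · obtain ⟨x, hx, rfl⟩ := hκ
      obtain ⟨g, hg⟩ := h x hx
      exact ⟨g, fun _ _ _ => hg⟩
    · exact ⟨fun _ => 0, fun x hx hxκ => absurd ⟨x, hx, hxκ⟩ hκ⟩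
  choose g hg using hfiber
  refine ⟨fun u => g (c u) u, fun i a w hw hsupp => ?_⟩
  have hX : ∀ u ∈ w.support, u ∈ X := fun u hu => (hsupp u hu).1
  have hca := apply_eq_of_forall_mem_support hc w hX
  refine hg (c a) a (hX a w.start_mem_support) rfl i w hw
    fun u hu => ⟨⟨hX u hu, hca u hu⟩, ?_⟩
  rw [← hca u hu]
  exact (hsupp u hu).2

lemma spanningCoe_induce_adj {X : Set V} {u v : V} :
    (G.induce X).spanningCoe.Adj u v ↔ G.Adj u v ∧ u ∈ X ∧ v ∈ X := by
  simp

lemma spanningCoe_induce_mono {X Y : Set V} (hXY : X ⊆ Y) :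
    (G.induce X).spanningCoe ≤ (G.induce Y).spanningCoe := fun _ _ h => by
  simp only [spanningCoe_induce_adj] at h ⊢
  exact ⟨h.1, hXY h.2.1, hXY h.2.2⟩

lemma mem_of_reachable_spanningCoe_induce {X : Set V} {a b : V}
    (h : (G.induce X).spanningCoe.Reachable a b) (hb : b ∈ X) : a ∈ X := by
  obtain ⟨w⟩ := h
  cases w with
  | nil => exact hb
  | cons hadj _ => exact (spanningCoe_induce_adj.1 hadj).2.1

lemma reachable_spanningCoe_induce_setOf_reachable {H : SimpleGraph V} (hH : H ≤ G) {a b : V}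
    (h : H.Reachable a b) : (G.induce {u | H.Reachable u b}).spanningCoe.Reachable a b := by
  obtain ⟨w⟩ := h
  induction w with
  | nil => rfl
  | cons hadj w ih =>
    exact (spanningCoe_induce_adj.2 ⟨hH hadj, (w.cons hadj).reachable, w.reachable⟩).reachable
      |>.trans ih

/-- `v` is the first vertex of an induced path of `G` with `n` edges (so `n + 1` vertices), all of
whose vertices lie in `C`. -/
def HasInducedPathFrom (G : SimpleGraph V) (C : Set V) (v : V) (n : ℕ) : Prop :=
  ∃ f : pathGraph (n + 1) ↪g G, f 0 = v ∧ ∀ i, f i ∈ C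

def pathGraphEmbeddingCons {n : ℕ} (f : pathGraph (n + 1) ↪g G) (u : V) (hadj : G.Adj u (f 0))
    (hfar : ∀ i, i ≠ 0 → ¬ G.Adj u (f i)) (hne : ∀ i, f i ≠ u) :
    pathGraph (n + 2) ↪g G where
  toFun := Fin.cons u f
  inj' a b hab := by
    cases a using Fin.cases <;> cases b using Fin.cases <;>
      simp_all [(hne _).symm, f.injective.eq_iff]
  map_rel_iff' {a b} := by
    have hu : ∀ i, G.Adj u (f i) ↔ i = 0 := fun i => by
      by_cases hi : i = 0
      · simp [hi, hadj]
      · simp [hi, hfar i hi]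
    change G.Adj (Fin.cons (α := fun _ => V) u f a) (Fin.cons (α := fun _ => V) u f b) ↔ _
    cases a using Fin.cases <;> cases b using Fin.cases <;>
      simp [pathGraph_adj, hu, G.adj_comm _ u, f.map_rel_iff]

lemma hasInducedPathFrom_zero {C : Set V} {y : V} (hy : y ∈ C) : HasInducedPathFrom G C y 0 :=
  ⟨⟨⟨fun _ => y, fun a b _ => Subsingleton.elim (α := Fin 1) a b⟩, by simp [pathGraph_adj]⟩,
    rfl, fun _ => hy⟩

lemma HasInducedPathFrom.mono {C D : Set V} {v : V} {n : ℕ} (h : HasInducedPathFrom G C v n)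
    (hCD : C ⊆ D) : HasInducedPathFrom G D v n :=
  let ⟨f, hf0, hf⟩ := h
  ⟨f, hf0, fun i => hCD (hf i)⟩

lemma HasInducedPathFrom.hasInducedCopy {C : Set V} {v : V} {n : ℕ}
    (h : HasInducedPathFrom G C v n) : HasInducedCopy (pathGraph (n + 1)) G :=
  let ⟨f, _⟩ := h
  ⟨f.toEmbedding, fun _ _ => f.map_rel_iff⟩

lemma HasInducedPathFrom.cons {C : Set V} {v v' : V} {n : ℕ} (h : HasInducedPathFrom G C v' n)
    (hadj : G.Adj v v') (hfar : ∀ u ∈ C, u ≠ v' → u ≠ v ∧ ¬ G.Adj v u) :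
    HasInducedPathFrom G (insert v C) v (n + 1) := by
  obtain ⟨f, rfl, hf⟩ := h
  have hfar' : ∀ i ≠ 0, f i ≠ v ∧ ¬ G.Adj v (f i) :=
    fun i hi => hfar _ (hf i) (f.injective.ne hi)
  refine ⟨pathGraphEmbeddingCons f v hadj (fun i hi => (hfar' i hi).2) fun i => ?_, rfl,
    Fin.cases (Set.mem_insert v C) fun i => Set.mem_insert_of_mem v (hf i)⟩
  by_cases hi : i = 0
  · exact hi ▸ hadj.ne.symm
  · exact (hfar' i hi).1

lemma hasInducedPathFrom_two {v v' y : V} (hvv' : G.Adj v v') (hv'y : G.Adj v' y)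
    (hy : y ≠ v ∧ ¬ G.Adj v y) : HasInducedPathFrom G {v, v', y} v 2 := by
  refine ((hasInducedPathFrom_zero (Set.mem_singleton y)).cons hv'y ?_).cons hvv' ?_
  · simp
  · rintro u (rfl | rfl) hu
    · exact absurd rfl hu
    · exact hy

lemma reachable_insert_setOf_reachable {X : Set V} {x y v' z : V} (hv'y : G.Adj v' y)
    (hy : (G.induce X).spanningCoe.Reachable y x) (hz : (G.induce X).spanningCoe.Reachable z x) :
    (G.induce (insert v' {u | (G.induce X).spanningCoe.Reachable u x})).spanningCoe.Reachable
      z v' := by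
  have hzy : (G.induce {u | (G.induce X).spanningCoe.Reachable u x}).spanningCoe.Reachable z y :=
    (reachable_spanningCoe_induce_setOf_reachable (G.spanningCoe_induce_le X) hz).trans
      (reachable_spanningCoe_induce_setOf_reachable (G.spanningCoe_induce_le X) hy).symm
  refine (hzy.mono (spanningCoe_induce_mono (Set.subset_insert _ _))).trans ?_
  exact (spanningCoe_induce_adj.2 ⟨hv'y.symm, Set.mem_insert_of_mem _ hy, Set.mem_insert _ _⟩)
    |>.reachable

lemma exists_adj_neighbor_of_mem_diff {C : Set V} {v x : V}
    (hconn : ∀ u ∈ C, (G.induce C).spanningCoe.Reachable u v)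
    (hx : x ∈ C \ insert v (G.neighborSet v)) :
    ∃ v' y, v' ∈ C ∧ G.Adj v v' ∧ G.Adj v' y ∧
      (G.induce (C \ insert v (G.neighborSet v))).spanningCoe.Reachable y x := by
  set W := C \ insert v (G.neighborSet v)
  obtain ⟨w⟩ := hconn x hx.1
  obtain ⟨d, -, hy, hv'⟩ := w.exists_boundary_dart {u | (G.induce W).spanningCoe.Reachable u x}
    (Reachable.refl x) fun hv => (mem_of_reachable_spanningCoe_induce hv hx).2 (Set.mem_insert v _)
  obtain ⟨hadj, hyC, hv'C⟩ := spanningCoe_induce_adj.1 d.adj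
  have hyW : d.fst ∈ W := mem_of_reachable_spanningCoe_induce hy hx
  have hv'W : d.snd ∉ W := fun hv'W =>
    hv' ((spanningCoe_induce_adj.2 ⟨hadj.symm, hv'W, hyW⟩).reachable.trans hy)
  obtain rfl | hvv' : d.snd = v ∨ G.Adj v d.snd := by
    simpa [W, hv'C, or_iff_not_imp_left] using hv'W
  · exact absurd (Set.mem_insert_of_mem _ hadj.symm) hyW.2
  · exact ⟨d.snd, d.fst, hv'C, hvv', hadj.symm, hy⟩

theorem balancedColorableOn_of_not_hasInducedPathFrom (h : AllTrianglesPositive G σ) (m : ℕ) :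
    ∀ {C : Set V} {v : V}, v ∈ C → (∀ x ∈ C, (G.induce C).spanningCoe.Reachable x v) →
      ¬ HasInducedPathFrom G C v (m + 2) → BalancedColorableOn G σ C (m + 1) := by
  induction m with
  | zero =>
    intro C v hv hconn hpath
    refine (isBalancedSet_insert_neighborSet h v).balancedColorableOn_one.mono fun x hxC => ?_
    by_contra hxN
    obtain ⟨v', y, hv'C, hvv', hv'y, hy⟩ := exists_adj_neighbor_of_mem_diff hconn ⟨hxC, hxN⟩
    have hyW := mem_of_reachable_spanningCoe_induce hy ⟨hxC, hxN⟩
    refine hpath ((hasInducedPathFrom_two hvv' hv'y (by simpa [not_or] using hyW.2)).mono ?_)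
    simp [Set.insert_subset_iff, hv, hv'C, hyW.1]
  | succ m ih =>
    intro C v hv hconn hpath
    set W := C \ insert v (G.neighborSet v)
    set R := (G.induce W).spanningCoe
    have hfiber : ∀ x ∈ W, BalancedColorableOn G σ
        {u | u ∈ W ∧ R.connectedComponentMk u = R.connectedComponentMk x} (m + 1) := by
      intro x hx
      obtain ⟨v', y, hv'C, hvv', hv'y, hy⟩ := exists_adj_neighbor_of_mem_diff hconn hx
      set K := {u | R.Reachable u x}
      have hKW : K ⊆ W := fun u hu => mem_of_reachable_spanningCoe_induce hu hx
      refine (ih (C := insert v' K) (Set.mem_insert v' K) ?_ ?_).mono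
        fun u hu => Set.mem_insert_of_mem _ (ConnectedComponent.eq.1 hu.2)
      · rintro z (rfl | hz)
        · rfl
        · exact reachable_insert_setOf_reachable hv'y hy hz
      · intro hp
        refine hpath ((hp.cons hvv' fun u hu hne => ?_).mono ?_)
        · simpa [not_or] using (hKW (hu.resolve_left hne)).2
        · simpa [Set.insert_subset_iff, hv, hv'C] using hKW.trans Set.sdiff_subset
    have hW : BalancedColorableOn G σ W (m + 1) :=
      balancedColorableOn_of_fibers R.connectedComponentMk (fun u hu u' hu' hadj =>
        ConnectedComponent.eq.2 (spanningCoe_induce_adj.2 ⟨hadj, hu, hu'⟩).reachable) hfiber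
    refine (hW.union_of_isBalancedSet (isBalancedSet_insert_neighborSet h v)).mono ?_
    rw [Set.sdiff_union_self]
    exact Set.subset_union_left

end

theorem stmt11_general {V : Type*} (k : ℕ) (hk : 0 < k)
    (G : SimpleGraph V) (σ : Sym2 V → ℤˣ)
    (h1 : AllTrianglesPositive G σ)
    (h2 : ¬ HasInducedCopy (pathGraph (k + 2)) G) :
    balancedChromNum G σ < 2 ^ k := by
  obtain ⟨m, rfl⟩ : ∃ m, k = m + 1 := ⟨k - 1, by omega⟩
  have hcomp : ∀ x, BalancedColorableOn G σ {u | G.Reachable u x} (m + 1) := fun x =>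
    balancedColorableOn_of_not_hasInducedPathFrom h1 m (Reachable.refl x)
      (fun _ hu => reachable_spanningCoe_induce_setOf_reachable le_rfl hu)
      fun hp => h2 hp.hasInducedCopy
  have hcol : BalancedColorableOn G σ Set.univ (m + 1) :=
    balancedColorableOn_of_fibers G.connectedComponentMk
      (fun _ _ _ _ hadj => ConnectedComponent.eq.2 hadj.reachable)
      fun x _ => (hcomp x).mono fun _ hu => ConnectedComponent.eq.1 hu.2
  exact (Nat.sInf_le hcol.balancedColorable).trans_lt Nat.lt_two_pow_self

/-- triangle-positive, induced-P_{k+2}-free signed graphs have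
χ_b < 2^k. -/
theorem stmt11 {V : Type*} [Fintype V] (k : ℕ) (hk : 0 < k)
    (G : SimpleGraph V) (σ : Sym2 V → ℤˣ)
    (h1 : AllTrianglesPositive G σ)
    (h2 : ¬ HasInducedCopy (pathGraph (k + 2)) G) :
    balancedChromNum G σ < 2 ^ k :=
  stmt11_general k hk G σ h1 h2

end SignedGS
end

section
/- Let (G, σ) be a signed graph whose underlying graph is the full join G_1 ⋈ G_2 of two vertex-disjoint graphs G_1 and G_2, and suppose that (G, σ) contains no triangle whose three edges are all negative and no four vertices inducing a copy of (K_4, M), the complete graph on 4 vertices whose negative edges form a perfect matching (exactly two disjoint negative edges, the other four edges positive). If the signed subgraph induced on V(G_1) contains a negative edge, then the graph formed by the negative edges of (G, σ) inside V(G_2) has chromatic number at most 3. -/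
open SimpleGraph

namespace SignedGS

variable {V : Type*}

/-!
Let `xy` be a negative edge of `G1`; in the full join every vertex of `G2` is adjacent to both
`x` and `y`. Colour a vertex `v` of `G2` by `0` if `xv` is negative, else by `1` if `yv` is
negative, else by `2`. A negative edge `vw` inside class `0` (resp. `1`) closes an all-negative
triangle with `x` (resp. `y`), and one inside class `2` spans, together with `xy`, a `(K_4, M)`.
-/

variable {G : SimpleGraph V} {σ : Sym2 V → ℤˣ}

theorem hasNegTriangle_of_negSubgraph_adj {u v w : V} (huv : G.Adj u v) (huw : G.Adj u w)
    (hσuv : σ s(u, v) = -1) (hσuw : σ s(u, w) = -1) (hvw : (negSubgraph G σ).Adj v w) :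
    HasNegTriangle G σ :=
  ⟨u, v, w, huv, hvw.1, huw, hσuv, hvw.2, hσuw⟩

theorem hasK4M_of_negSubgraph_adj {x y v w : V} (hxy : (negSubgraph G σ).Adj x y)
    (hvw : (negSubgraph G σ).Adj v w) (hxv : G.Adj x v) (hxw : G.Adj x w) (hyv : G.Adj y v)
    (hyw : G.Adj y w) (hσxv : σ s(x, v) = 1) (hσxw : σ s(x, w) = 1) (hσyv : σ s(y, v) = 1)
    (hσyw : σ s(y, w) = 1) :
    HasK4M G σ :=
  ⟨x, y, v, w, hxy.1.ne, hxv.ne, hxw.ne, hyv.ne, hyw.ne, hvw.1.ne, hxy.1, hxv, hxw, hyv, hyw,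
    hvw.1, hxy.2, hvw.2, hσxv, hσxw, hσyv, hσyw⟩

def negNbhdColor (σ : Sym2 V → ℤˣ) (x y v : V) : Fin 3 :=
  if σ s(x, v) = -1 then 0 else if σ s(y, v) = -1 then 1 else 2

section negNbhdColor

variable {x y v : V}

theorem negNbhdColor_eq_zero : negNbhdColor σ x y v = 0 ↔ σ s(x, v) = -1 := by
  unfold negNbhdColor
  split_ifs <;> simp_all

theorem negNbhdColor_eq_one : negNbhdColor σ x y v = 1 ↔ σ s(y, v) = -1 ∧ σ s(x, v) ≠ -1 := by
  unfold negNbhdColor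
  split_ifs <;> simp_all

theorem negNbhdColor_eq_two : negNbhdColor σ x y v = 2 ↔ σ s(x, v) = 1 ∧ σ s(y, v) = 1 := by
  have units_ne_neg_one (a : ℤˣ) : a ≠ -1 ↔ a = 1 := by
    rcases Int.units_eq_one_or a with rfl | rfl <;> decide
  unfold negNbhdColor
  split_ifs <;> simp_all

end negNbhdColor

theorem negNbhdColor_ne_of_negSubgraph_adj (hT : ¬HasNegTriangle G σ) (hM : ¬HasK4M G σ)
    {x y v w : V} (hxy : (negSubgraph G σ).Adj x y) (hv : G.Adj x v ∧ G.Adj y v)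
    (hw : G.Adj x w ∧ G.Adj y w) (hvw : (negSubgraph G σ).Adj v w) :
    negNbhdColor σ x y v ≠ negNbhdColor σ x y w := by
  intro hc
  obtain ⟨i, hiv, hiw⟩ : ∃ i, negNbhdColor σ x y v = i ∧ negNbhdColor σ x y w = i := ⟨_, hc, rfl⟩
  fin_cases i
  · rw [Fin.zero_eta, negNbhdColor_eq_zero] at hiv hiw
    exact hT (hasNegTriangle_of_negSubgraph_adj hv.1 hw.1 hiv hiw hvw)
  · rw [Fin.mk_one, negNbhdColor_eq_one] at hiv hiw
    exact hT (hasNegTriangle_of_negSubgraph_adj hv.2 hw.2 hiv.1 hiw.1 hvw)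
  · rw [show (⟨2, _⟩ : Fin 3) = 2 from rfl, negNbhdColor_eq_two] at hiv hiw
    exact hM (hasK4M_of_negSubgraph_adj hxy hvw hv.1 hw.1 hv.2 hw.2 hiv.1 hiw.1 hiv.2 hiw.2)

theorem colorable_three_of_hom_negSubgraph {W : Type*} {H : SimpleGraph W}
    (hT : ¬HasNegTriangle G σ) (hM : ¬HasK4M G σ) {x y : V} (hxy : (negSubgraph G σ).Adj x y)
    (f : H →g negSubgraph G σ) (hf : ∀ a, G.Adj x (f a) ∧ G.Adj y (f a)) :
    H.Colorable 3 :=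
  ⟨Coloring.mk (negNbhdColor σ x y ∘ f) fun hab =>
    negNbhdColor_ne_of_negSubgraph_adj hT hM hxy (hf _) (hf _) (f.map_adj hab)⟩

def negSubgraphFullJoinInr {W1 W2 : Type*} (G1 : SimpleGraph W1) (G2 : SimpleGraph W2)
    (σ : Sym2 (W1 ⊕ W2) → ℤˣ) :
    negSubgraph G2 (fun e => σ (Sym2.map Sum.inr e)) →g negSubgraph (fullJoin G1 G2) σ where
  toFun := Sum.inr
  map_rel' h := h

theorem stmt14_general {W1 W2 : Type*}
    (G1 : SimpleGraph W1) (G2 : SimpleGraph W2) (σ : Sym2 (W1 ⊕ W2) → ℤˣ)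
    (h1 : ¬ HasNegTriangle (fullJoin G1 G2) σ)
    (h2 : ¬ HasK4M (fullJoin G1 G2) σ)
    (h3 : ∃ x y : W1, G1.Adj x y ∧ σ s(Sum.inl x, Sum.inl y) = -1) :
    (negSubgraph G2 (fun e => σ (Sym2.map Sum.inr e))).chromaticNumber ≤ 3 := by
  obtain ⟨x, y, hxy⟩ := h3
  have hcol := colorable_three_of_hom_negSubgraph h1 h2 (x := .inl x) (y := .inl y) hxy
    (negSubgraphFullJoinInr G1 G2 σ) fun _ => ⟨trivial, trivial⟩
  exact_mod_cast hcol.chromaticNumber_le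

/-- in a full join with no all-negative triangle and no (K_4,M),
a negative edge on one side forces the negative edges on the other side to induce a
3-colorable graph. -/
theorem stmt14 {W1 W2 : Type*} [Fintype W1] [Fintype W2]
    (G1 : SimpleGraph W1) (G2 : SimpleGraph W2) (σ : Sym2 (W1 ⊕ W2) → ℤˣ)
    (h1 : ¬ HasNegTriangle (fullJoin G1 G2) σ)
    (h2 : ¬ HasK4M (fullJoin G1 G2) σ)
    (h3 : ∃ x y : W1, G1.Adj x y ∧ σ s(Sum.inl x, Sum.inl y) = -1) :
    (negSubgraph G2 (fun e => σ (Sym2.map Sum.inr e))).chromaticNumber ≤ 3 :=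
  stmt14_general G1 G2 σ h1 h2 h3

end SignedGS
end
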